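/- The set S is attracting for the dynamics: for every token index i ∈ {1,…,n}, dist(z_i^k, S) → 0 as k → ∞. -/

import Mathlib

open scoped RealInnerProductSpace BigOperators Classical
open Filter Metric

noncomputable section

/-- The hardmax attention (argmax) index set `C_i` for a token configuration `z`
(attention matrix `A = I`): the set of indices `j` maximizing `⟪z_i, z_j⟫`. -/
def attn {d n : ℕ} (z : Fin n → EuclideanSpace ℝ (Fin d)) (i : Fin n) : Finset (Fin n) :=
  Finset.univ.filter fun j => (⟪z i, z j⟫ = ⨆ ℓ, ⟪z i, z ℓ⟫)

/-- The pure-attention hardmax transformer dynamics with step-size `α > 0` and `A = I`: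
`z_i^{k+1} = z_i^k + (α/(1+α))·(1/|C_i^k|)·Σ_{j ∈ C_i^k} (z_j^k − z_i^k)`. -/
def IsDyn {d n : ℕ} (α : ℝ) (z : ℕ → Fin n → EuclideanSpace ℝ (Fin d)) : Prop :=
  ∀ k i, z (k + 1) i = z k i +
    (α / (1 + α)) • (((attn (z k) i).card : ℝ)⁻¹ • ∑ j ∈ attn (z k) i, (z k j - z k i))

/-- The limiting set `K = ⋂ₖ co(Z^k)`, the intersection of the convex hulls of the token
configurations over all times. -/
def limitK {d n : ℕ} (z : ℕ → Fin n → EuclideanSpace ℝ (Fin d)) :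
    Set (EuclideanSpace ℝ (Fin d)) :=
  ⋂ k, convexHull ℝ (Set.range (z k))

/-- The cluster set `S = { x ∈ K : max_{v ∈ V} ⟪v − x, x⟫ = 0 }`, where `V` is the set of
extreme points (vertices) of `K`; `max … = 0` is phrased as: `0` is the greatest element of
the set of values `⟪v − x, x⟫`, `v ∈ V`. -/
def clusterSet {d : ℕ} (K : Set (EuclideanSpace ℝ (Fin d))) :
    Set (EuclideanSpace ℝ (Fin d)) :=
  {x ∈ K | IsGreatest ((fun v => ⟪v - x, x⟫) '' (Set.extremePoints ℝ K)) 0}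

/-! Each step moves `z_i` to a convex combination of `z_i` and the mean `m_i` of its attention
set, so the hulls `co(Z^k)` decrease and every token stays in the compact set `co(Z^0)`. Since
`⟪z_i, m_i⟫ = max_ℓ ⟪z_i, z_ℓ⟫`, a step increases `‖z_i‖²` by at least `2α/(1+α)` times the
attention gap `max_ℓ ⟪z_i, z_ℓ⟫ - ‖z_i‖²`; as `‖z_i‖²` is bounded, the gap tends to `0`.
Hence a cluster point `x` of `z_i^k` lies in `K` and maximizes `⟪x, ·⟫` over `K`; the face of
`K` exposed by `x` then contains an extreme point `v` with `⟪v - x, x⟫ = 0`, so `x ∈ S`.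
A sequence in a compact set all of whose cluster points lie in `S` approaches `S`. -/

variable {E : Type*} [NormedAddCommGroup E] [InnerProductSpace ℝ E]

theorem IsCompact.exists_mem_extremePoints_isMaxOn {F : Type*} [AddCommGroup F] [Module ℝ F]
    [TopologicalSpace F] [T2Space F] [IsTopologicalAddGroup F] [ContinuousSMul ℝ F]
    [LocallyConvexSpace ℝ F] {K : Set F} (hK : IsCompact K) (hne : K.Nonempty)
    (l : StrongDual ℝ F) : ∃ v ∈ K.extremePoints ℝ, IsMaxOn l K v := by
  have hexp : IsExposed ℝ K (l.toExposed K) := ContinuousLinearMap.toExposed.isExposed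
  obtain ⟨w, hwK, hw⟩ := hK.exists_isMaxOn hne l.continuous.continuousOn
  obtain ⟨v, hv⟩ := (hexp.isCompact hK).extremePoints_nonempty ⟨w, hwK, fun y hy => hw hy⟩
  exact ⟨v, hexp.isExtreme.extremePoints_subset_extremePoints hv, fun y hy => hv.1.2 y hy⟩

theorem mem_clusterSet_of_forall_inner_le {d : ℕ} {K : Set (EuclideanSpace ℝ (Fin d))}
    {x : EuclideanSpace ℝ (Fin d)} (hK : IsCompact K) (hxK : x ∈ K)
    (hx : ∀ y ∈ K, ⟪x, y⟫ ≤ ‖x‖ ^ 2) : x ∈ clusterSet K := by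
  obtain ⟨v, hvK, hv⟩ := hK.exists_mem_extremePoints_isMaxOn ⟨x, hxK⟩ (innerSL ℝ x)
  have hxv : ‖x‖ ^ 2 ≤ ⟪x, v⟫ := by simpa [real_inner_self_eq_norm_sq] using hv hxK
  refine ⟨hxK, ⟨v, hvK, ?_⟩, ?_⟩
  · show ⟪v - x, x⟫ = 0
    rw [inner_sub_left, real_inner_comm, real_inner_self_eq_norm_sq]
    linarith [hx v hvK.1]
  · rintro _ ⟨u, huK, rfl⟩
    show ⟪u - x, x⟫ ≤ 0
    rw [inner_sub_left, real_inner_comm, real_inner_self_eq_norm_sq]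
    linarith [hx u huK.1]

theorem tendsto_infDist_of_mapClusterPt_mem {X ι : Type*} [PseudoMetricSpace X] {l : Filter ι}
    {u : ι → X} {B S : Set X} (hB : IsCompact B) (huB : ∀ᶠ k in l, u k ∈ B)
    (hS : ∀ x, MapClusterPt x l u → x ∈ S) : Tendsto (fun k => infDist (u k) S) l (nhds 0) := by
  refine tendsto_order.2 ⟨fun a ha => .of_forall fun k => ha.trans_le infDist_nonneg,
    fun ε hε => ?_⟩
  by_contra hfar
  have hfar' : ∃ᶠ k in l, u k ∈ B ∩ {y | ε ≤ infDist y S} :=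
    (huB.and_frequently (not_eventually.1 hfar)).mono fun k hk => ⟨hk.1, not_lt.1 hk.2⟩
  have hfarB : IsCompact (B ∩ {y | ε ≤ infDist y S}) :=
    hB.inter_right (isClosed_le continuous_const (continuous_infDist_pt S))
  obtain ⟨x, ⟨-, hxε⟩, hx⟩ := hfarB.exists_mapClusterPt_of_frequently hfar'
  exact ((show ε ≤ infDist x S from hxε).trans_eq (infDist_zero_of_mem (hS x hx))).not_gt hε

theorem tendsto_zero_of_add_mul_le_succ {a g : ℕ → ℝ} {c : ℝ} (hc : 0 < c) (hg : ∀ k, 0 ≤ g k)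
    (hstep : ∀ k, a k + c * g k ≤ a (k + 1)) (hbdd : BddAbove (Set.range a)) :
    Tendsto g atTop (nhds 0) := by
  have hmono : Monotone a := monotone_nat_of_le_succ fun k => by nlinarith [hg k, hstep k]
  have hlim := tendsto_atTop_ciSup hmono hbdd
  have hincr : Tendsto (fun k => (a (k + 1) - a k) / c) atTop (nhds 0) := by
    simpa using ((hlim.comp (tendsto_add_atTop_nat 1)).sub hlim).div_const c
  refine tendsto_of_tendsto_of_tendsto_of_le_of_le tendsto_const_nhds hincr hg fun k => ?_
  rw [le_div_iff₀ hc]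
  linarith [hstep k]

theorem inner_le_iSup_inner {ι : Type*} [Finite ι] (z : ι → E) (i j : ι) :
    ⟪z i, z j⟫ ≤ ⨆ ℓ, ⟪z i, z ℓ⟫ :=
  le_ciSup (f := fun ℓ => ⟪z i, z ℓ⟫) (Set.finite_range _).bddAbove j

theorem inner_le_iSup_inner_of_mem_convexHull {ι : Type*} [Finite ι] (z : ι → E) (i : ι) {y : E}
    (hy : y ∈ convexHull ℝ (Set.range z)) : ⟪z i, y⟫ ≤ ⨆ ℓ, ⟪z i, z ℓ⟫ := by
  obtain ⟨_, ⟨j, rfl⟩, hj⟩ := ((innerₛₗ ℝ (z i)).convexOn convex_univ).exists_ge_of_mem_convexHull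
    (Set.subset_univ _) hy
  exact hj.trans (inner_le_iSup_inner z i j)

theorem isCompact_convexHull_range {ι : Type*} [Finite ι] (z : ι → E) :
    IsCompact (convexHull ℝ (Set.range z)) :=
  (Set.finite_range z).isCompact_convexHull (𝕜 := ℝ)

section Attention

variable {d n : ℕ}

theorem attn_nonempty (z : Fin n → EuclideanSpace ℝ (Fin d)) (i : Fin n) :
    (attn z i).Nonempty := by
  have : Nonempty (Fin n) := ⟨i⟩
  obtain ⟨j, hj⟩ := exists_eq_ciSup_of_finite (f := fun ℓ => ⟪z i, z ℓ⟫)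
  exact ⟨j, Finset.mem_filter.2 ⟨Finset.mem_univ _, hj⟩⟩

theorem card_attn_pos (z : Fin n → EuclideanSpace ℝ (Fin d)) (i : Fin n) :
    (0 : ℝ) < (attn z i).card :=
  mod_cast (attn_nonempty z i).card_pos

def attnMean (z : Fin n → EuclideanSpace ℝ (Fin d)) (i : Fin n) : EuclideanSpace ℝ (Fin d) :=
  ((attn z i).card : ℝ)⁻¹ • ∑ j ∈ attn z i, z j

theorem attnMean_mem_convexHull (z : Fin n → EuclideanSpace ℝ (Fin d)) (i : Fin n) :
    attnMean z i ∈ convexHull ℝ (Set.range z) := by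
  rw [attnMean, Finset.smul_sum]
  refine (convex_convexHull ℝ _).sum_mem (fun j _ => by positivity) ?_
    fun j _ => subset_convexHull ℝ _ (Set.mem_range_self j)
  rw [Finset.sum_const, nsmul_eq_mul]
  exact mul_inv_cancel₀ (card_attn_pos z i).ne'

theorem inner_attnMean (z : Fin n → EuclideanSpace ℝ (Fin d)) (i : Fin n) :
    ⟪z i, attnMean z i⟫ = ⨆ ℓ, ⟪z i, z ℓ⟫ := by
  have hsum : ∑ j ∈ attn z i, ⟪z i, z j⟫ = (attn z i).card * ⨆ ℓ, ⟪z i, z ℓ⟫ := by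
    have hmax : ∀ j ∈ attn z i, ⟪z i, z j⟫ = ⨆ ℓ, ⟪z i, z ℓ⟫ := fun j hj =>
      (Finset.mem_filter.1 hj).2
    rw [Finset.sum_congr rfl hmax, Finset.sum_const, nsmul_eq_mul]
  rw [attnMean, real_inner_smul_right, inner_sum, hsum,
    inv_mul_cancel_left₀ (card_attn_pos z i).ne']

def attnGap (z : Fin n → EuclideanSpace ℝ (Fin d)) (i : Fin n) : ℝ :=
  (⨆ ℓ, ⟪z i, z ℓ⟫) - ‖z i‖ ^ 2

theorem attnGap_nonneg (z : Fin n → EuclideanSpace ℝ (Fin d)) (i : Fin n) : 0 ≤ attnGap z i := by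
  rw [attnGap, sub_nonneg, ← real_inner_self_eq_norm_sq]
  exact inner_le_iSup_inner z i i

end Attention

theorem isCompact_limitK {d n : ℕ} (z : ℕ → Fin n → EuclideanSpace ℝ (Fin d)) :
    IsCompact (limitK z) :=
  (isCompact_convexHull_range (z 0)).of_isClosed_subset
    (isClosed_iInter fun k => (isCompact_convexHull_range (z k)).isClosed) (Set.iInter_subset _ 0)

namespace IsDyn

variable {d n : ℕ} {α : ℝ} {z : ℕ → Fin n → EuclideanSpace ℝ (Fin d)}

theorem step (hdyn : IsDyn α z) (k : ℕ) (i : Fin n) :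
    z (k + 1) i = z k i + (α / (1 + α)) • (attnMean (z k) i - z k i) := by
  rw [hdyn k i, Finset.sum_sub_distrib, Finset.sum_const, ← Nat.cast_smul_eq_nsmul ℝ, attnMean,
    smul_sub, inv_smul_smul₀ (card_attn_pos (z k) i).ne']

theorem mem_convexHull_succ (hdyn : IsDyn α z) (hα : 0 < α) (k : ℕ) (i : Fin n) :
    z (k + 1) i ∈ convexHull ℝ (Set.range (z k)) := by
  have hc : α / (1 + α) ≤ 1 := (div_le_one (by linarith)).2 (by linarith)
  have hcomb : z (k + 1) i = (1 - α / (1 + α)) • z k i + (α / (1 + α)) • attnMean (z k) i := by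
    rw [hdyn.step]
    module
  rw [hcomb]
  exact convex_convexHull ℝ _ (subset_convexHull ℝ _ (Set.mem_range_self i))
    (attnMean_mem_convexHull (z k) i) (by linarith) (by positivity) (by ring)

theorem convexHull_antitone (hdyn : IsDyn α z) (hα : 0 < α) :
    Antitone fun k => convexHull ℝ (Set.range (z k)) :=
  antitone_nat_of_succ_le fun k => convexHull_min
    (Set.range_subset_iff.2 (hdyn.mem_convexHull_succ hα k)) (convex_convexHull ℝ _)

theorem mem_convexHull_of_le (hdyn : IsDyn α z) (hα : 0 < α) {k l : ℕ} (hkl : k ≤ l) (i : Fin n) :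
    z l i ∈ convexHull ℝ (Set.range (z k)) :=
  hdyn.convexHull_antitone hα hkl (subset_convexHull ℝ _ (Set.mem_range_self i))

theorem norm_sq_add_attnGap_le (hdyn : IsDyn α z) (k : ℕ) (i : Fin n) :
    ‖z k i‖ ^ 2 + 2 * (α / (1 + α)) * attnGap (z k) i ≤ ‖z (k + 1) i‖ ^ 2 := by
  have hinner : ⟪z k i, (α / (1 + α)) • (attnMean (z k) i - z k i)⟫
      = (α / (1 + α)) * attnGap (z k) i := by
    rw [real_inner_smul_right, inner_sub_right, inner_attnMean, real_inner_self_eq_norm_sq, attnGap]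
  rw [hdyn.step, norm_add_sq_real, hinner]
  nlinarith [sq_nonneg ‖(α / (1 + α)) • (attnMean (z k) i - z k i)‖]

theorem tendsto_attnGap (hdyn : IsDyn α z) (hα : 0 < α) (i : Fin n) :
    Tendsto (fun k => attnGap (z k) i) atTop (nhds 0) := by
  obtain ⟨R, hR⟩ := (isCompact_convexHull_range (z 0)).isBounded.exists_norm_le
  have hbdd : BddAbove (Set.range fun k => ‖z k i‖ ^ 2) := ⟨R ^ 2, by
    rintro _ ⟨k, rfl⟩
    exact pow_le_pow_left₀ (norm_nonneg _) (hR _ (hdyn.mem_convexHull_of_le hα k.zero_le i)) 2⟩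
  exact tendsto_zero_of_add_mul_le_succ (by positivity) (fun k => attnGap_nonneg (z k) i)
    (hdyn.norm_sq_add_attnGap_le · i) hbdd

theorem mapClusterPt_mem_clusterSet (hdyn : IsDyn α z) (hα : 0 < α) {i : Fin n}
    {x : EuclideanSpace ℝ (Fin d)} (hx : MapClusterPt x atTop fun k => z k i) :
    x ∈ clusterSet (limitK z) := by
  obtain ⟨σ, hσ, hσx⟩ := hx.tendsto_subseq
  have hxK : x ∈ limitK z := Set.mem_iInter.2 fun k =>
    (isCompact_convexHull_range (z k)).isClosed.mem_of_tendsto hσx <|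
      (eventually_ge_atTop k).mono fun t ht => hdyn.mem_convexHull_of_le hα (ht.trans hσ.le_apply) i
  have hmax : ∀ y ∈ limitK z, ⟪x, y⟫ ≤ ‖x‖ ^ 2 := by
    intro y hy
    have hlim : Tendsto (fun t => ⟪z (σ t) i, y⟫ - ‖z (σ t) i‖ ^ 2) atTop
        (nhds (⟪x, y⟫ - ‖x‖ ^ 2)) := (hσx.inner tendsto_const_nhds).sub (hσx.norm.pow 2)
    have hle (t : ℕ) : ⟪z (σ t) i, y⟫ - ‖z (σ t) i‖ ^ 2 ≤ attnGap (z (σ t)) i :=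
      sub_le_sub_right (inner_le_iSup_inner_of_mem_convexHull _ _ (Set.mem_iInter.1 hy (σ t))) _
    linarith [le_of_tendsto_of_tendsto' hlim ((hdyn.tendsto_attnGap hα i).comp hσ.tendsto_atTop)
      hle]
  exact mem_clusterSet_of_forall_inner_le (isCompact_limitK z) hxK hmax

end IsDyn

theorem clusterSet_attracting_general {d n : ℕ} (α : ℝ) (hα : 0 < α)
    (z : ℕ → Fin n → EuclideanSpace ℝ (Fin d)) (hdyn : IsDyn α z) :
    ∀ i : Fin n,
      Tendsto (fun k => infDist (z k i) (clusterSet (limitK z))) atTop (nhds 0) := fun i =>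
  tendsto_infDist_of_mapClusterPt_mem (isCompact_convexHull_range (z 0))
    (.of_forall fun k => hdyn.mem_convexHull_of_le hα k.zero_le i)
    fun _ hx => hdyn.mapClusterPt_mem_clusterSet hα hx

/-- The cluster set `S` is attracting: every token converges to `S` in distance. -/
theorem clusterSet_attracting {d n : ℕ} (hd : 0 < d) (hn : 0 < n) (α : ℝ) (hα : 0 < α)
    (z : ℕ → Fin n → EuclideanSpace ℝ (Fin d)) (hdyn : IsDyn α z)
    (hdist : ∀ i j : Fin n, i ≠ j → z 0 i ≠ z 0 j) (hnz : ∀ i, z 0 i ≠ 0) :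
    ∀ i : Fin n,
      Tendsto (fun k => infDist (z k i) (clusterSet (limitK z))) atTop (nhds 0) :=
  clusterSet_attracting_general α hα z hdyn

end
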